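/- F_U(r) = 0 for every r ≤ 0. -/

import Mathlib

open Filter Topology MeasureTheory

/-- `F_U(r) = (1/2π)·∫_{−∞}^{∞} e^{irs}/(c·e^{i·sign(s)·θπ/2}·|s|^θ + 1) ds`
(the real value of the integral, which is real by conjugation symmetry). -/
noncomputable def FUfun (c θ : ℝ) (r : ℝ) : ℝ :=
  ((1 / (2 * Real.pi)) * ∫ s : ℝ,
    Complex.exp (Complex.I * r * s) /
      ((c : ℂ) * Complex.exp (Complex.I * Real.sign s * θ * Real.pi / 2) *
        ((|s| ^ θ : ℝ) : ℂ) + 1)).re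

/-!
The integrand is the restriction to `ℝ` of `f z = exp (i r z) / (c (i z)^θ + 1)`, which is
holomorphic on the open lower half-plane and continuous up to `ℝ`. There `i z` has nonnegative
real part, so `c (i z)^θ` stays in the sector `|arg| ≤ θπ/2 < π`, away from `-1`; this bounds the
denominator below by a multiple of `(1 + |z|)^θ`, while `|exp (i r z)| ≤ 1` because `r ≤ 0`.
With `θ > 1` the decay is integrable, so by Cauchy's theorem the integral over `ℝ` equals the
integral over every line `Im z = y < 0`, and the latter tends to `0` as `y → -∞`.
-/

open Set Complex

section ContourShift

variable {E : Type*} [NormedAddCommGroup E] [NormedSpace ℂ E]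

theorem integral_add_mul_I_eq_of_tendsto {f : ℂ → E} {a b : ℝ} (hab : a ≤ b)
    (hc : ContinuousOn f (im ⁻¹' Icc a b)) (hd : DifferentiableOn ℂ f (im ⁻¹' Ioo a b))
    (ha : Integrable fun x : ℝ => f (x + a * I)) (hb : Integrable fun x : ℝ => f (x + b * I))
    {B : ℝ → ℝ} (hB : Tendsto B atTop (𝓝 0))
    (hfB : ∀ x y : ℝ, y ∈ Icc a b → ‖f (x + y * I)‖ ≤ B |x|) :
    ∫ x : ℝ, f (x + a * I) = ∫ x : ℝ, f (x + b * I) := by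
  have rect (T : ℝ) : (∫ x in -T..T, f (x + a * I)) - (∫ x in -T..T, f (x + b * I)) +
      I • (∫ y in a..b, f (T + y * I)) - I • (∫ y in a..b, f (-T + y * I)) = 0 := by
    simpa using integral_boundary_rect_eq_zero_of_continuousOn_of_differentiableOn f
      (-T + a * I) (T + b * I)
      (hc.mono fun z hz => by simpa [uIcc_of_le hab] using (mem_reProdIm.mp hz).2)
      (hd.mono fun z hz => by simpa [hab] using (mem_reProdIm.mp hz).2)
  have vertical {u : ℝ → ℝ} (hu : Tendsto (fun T => |u T|) atTop atTop) :
      Tendsto (fun T : ℝ => I • ∫ y in a..b, f (u T + y * I)) atTop (𝓝 0) := by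
    refine squeeze_zero_norm (fun T => ?_) (by simpa using (hB.comp hu).mul_const (b - a))
    rw [norm_smul, norm_I, one_mul, ← abs_of_nonneg (sub_nonneg.mpr hab)]
    exact intervalIntegral.norm_integral_le_of_norm_le_const fun y hy =>
      hfB _ y (Ioc_subset_Icc_self (uIoc_of_le hab ▸ hy))
  have := (((intervalIntegral_tendsto_integral ha tendsto_neg_atTop_atBot tendsto_id).sub
    (intervalIntegral_tendsto_integral hb tendsto_neg_atTop_atBot tendsto_id)).add
    (vertical (u := id) tendsto_abs_atTop_atTop)).sub
    (vertical (u := Neg.neg) (by simpa using tendsto_abs_atTop_atTop))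
  simp only [id, ofReal_neg, rect, add_zero, sub_zero] at this
  exact sub_eq_zero.mp (tendsto_nhds_unique tendsto_const_nhds this).symm

theorem integral_eq_zero_of_lowerHalfPlane {f : ℂ → E} {K s : ℝ} (hs : 1 < s)
    (hc : ContinuousOn f {z | z.im ≤ 0}) (hd : DifferentiableOn ℂ f {z | z.im < 0})
    (hf : ∀ z : ℂ, z.im ≤ 0 → ‖f z‖ ≤ K * (1 + ‖z‖) ^ (-s)) :
    ∫ x : ℝ, f x = 0 := by
  have hK : 0 ≤ K := by simpa using (norm_nonneg _).trans (hf 0 le_rfl)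
  have hmono {t u : ℝ} (ht : 0 ≤ t) (htu : t ≤ u) : K * (1 + u) ^ (-s) ≤ K * (1 + t) ^ (-s) :=
    mul_le_mul_of_nonneg_left (Real.rpow_le_rpow_of_nonpos (by positivity) (by linarith)
      (by linarith)) hK
  have hbound (x : ℝ) {y : ℝ} (hy : y ≤ 0) : ‖f (x + y * I)‖ ≤ K * (1 + |x|) ^ (-s) :=
    (hf _ (by simpa using hy)).trans
      (hmono (abs_nonneg x) (by simpa using abs_re_le_norm (x + y * I)))
  have hint : Integrable fun x : ℝ => K * (1 + |x|) ^ (-s) :=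
    (integrable_one_add_norm (by simpa using hs)).const_mul K
  have hline {y : ℝ} (hy : y ≤ 0) : Integrable fun x : ℝ => f (x + y * I) := by
    refine hint.mono' ?_ (.of_forall fun x => hbound x hy)
    exact (hc.comp_continuous (by fun_prop) fun x => by simpa using hy).aestronglyMeasurable
  have hshift {y : ℝ} (hy : y ≤ 0) : ∫ x : ℝ, f (x + y * I) = ∫ x : ℝ, f (x + (0 : ℝ) * I) :=
    integral_add_mul_I_eq_of_tendsto hy (hc.mono fun z hz => hz.2)
      (hd.mono fun z hz => hz.2) (hline hy) (hline le_rfl)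
      ((tendsto_rpow_neg_atTop (by linarith)).comp (tendsto_atTop_add_const_left _ 1 tendsto_id)
        |>.const_mul K |>.trans (by simp))
      fun x y hy' => hbound x hy'.2
  have hlim : Tendsto (fun y : ℝ => ∫ x : ℝ, f (x + y * I)) atBot (𝓝 0) := by
    have hdecay : Tendsto (fun y : ℝ => K * (1 + |y|) ^ (-s)) atBot (𝓝 0) := by
      simpa using ((tendsto_rpow_neg_atTop (by linarith)).comp (tendsto_atTop_add_const_left _ 1
        tendsto_abs_atBot_atTop)).const_mul K
    simpa using tendsto_integral_filter_of_dominated_convergence _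
      ((eventually_le_atBot 0).mono fun y hy => (hline hy).aestronglyMeasurable)
      ((eventually_le_atBot 0).mono fun y hy => .of_forall fun x => hbound x hy) hint
      (.of_forall fun x => squeeze_zero_norm' ((eventually_le_atBot 0).mono fun y hy =>
        (hf _ (by simpa using hy)).trans
          (hmono (abs_nonneg y) (by simpa using abs_im_le_norm (x + y * I)))) hdecay)
  have := tendsto_nhds_unique (hlim.congr' (eventually_le_atBot 0 |>.mono fun y hy => hshift hy))
    tendsto_const_nhds
  simpa using this.symm

end ContourShift

theorem arg_I_mul_ofReal (s : ℝ) : arg (I * s) = Real.sign s * (Real.pi / 2) := by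
  rcases lt_trichotomy s 0 with hs | rfl | hs
  · rw [show I * s = ((-s : ℝ) : ℂ) * -I by push_cast; ring, arg_real_mul _ (neg_pos.mpr hs),
      arg_neg_I, Real.sign_of_neg hs]
    ring
  · simp
  · rw [mul_comm, arg_real_mul _ hs, arg_I, Real.sign_of_pos hs, one_mul]

theorem I_mul_ofReal_cpow (s θ : ℝ) :
    (I * s) ^ (θ : ℂ) = cexp (I * Real.sign s * θ * Real.pi / 2) * ((|s| ^ θ : ℝ) : ℂ) := by
  rw [cpow_ofReal, arg_I_mul_ofReal, norm_mul, norm_I, one_mul, norm_real, Real.norm_eq_abs,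
    mul_comm, show I * s.sign * θ * Real.pi / 2 = ((s.sign * (Real.pi / 2) * θ : ℝ) : ℂ) * I by
      push_cast; ring, exp_mul_I, ← ofReal_cos, ← ofReal_sin]

theorem cos_mul_norm_rpow_le_re_cpow {θ : ℝ} (hθ0 : 0 ≤ θ) (hθ2 : θ ≤ 2) {w : ℂ}
    (hw : 0 ≤ w.re) : Real.cos (θ * Real.pi / 2) * ‖w‖ ^ θ ≤ (w ^ (θ : ℂ)).re := by
  have harg : |arg w * θ| ≤ θ * Real.pi / 2 := by
    rw [abs_mul, abs_of_nonneg hθ0]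
    nlinarith [abs_arg_le_pi_div_two_iff.mpr hw]
  have hcos : Real.cos (θ * Real.pi / 2) ≤ Real.cos (arg w * θ) := by
    rw [← Real.cos_abs (arg w * θ)]
    exact Real.cos_le_cos_of_nonneg_of_le_pi (abs_nonneg _) (by nlinarith [Real.pi_pos]) harg
  rw [cpow_ofReal_re, mul_comm]
  exact mul_le_mul_of_nonneg_left hcos (by positivity)

theorem sqrt_mul_one_add_norm_le_norm_add_one {a : ℝ} (ha₀ : -1 ≤ a) (ha₁ : a ≤ 1) {u : ℂ}
    (hu : a * ‖u‖ ≤ u.re) : √((1 + a) / 2) * (1 + ‖u‖) ≤ ‖u + 1‖ := by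
  have hsq : ‖u + 1‖ ^ 2 = ‖u‖ ^ 2 + 2 * u.re + 1 := by
    rw [Complex.sq_norm, Complex.sq_norm, normSq_apply, normSq_apply]
    simp only [add_re, add_im, one_re, one_im, add_zero]
    ring
  rw [← pow_le_pow_iff_left₀ (by positivity) (norm_nonneg _) two_ne_zero, mul_pow,
    Real.sq_sqrt (by linarith), hsq]
  -- the difference of the two sides is at least `(1 - a) / 2 * (‖u‖ - 1) ^ 2`
  nlinarith [mul_nonneg (sub_nonneg.mpr ha₁) (sq_nonneg (‖u‖ - 1))]

theorem one_add_rpow_le {t θ : ℝ} (ht : 0 ≤ t) (hθ : 0 ≤ θ) :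
    (1 + t) ^ θ ≤ 2 ^ θ * (1 + t ^ θ) := by
  have htθ : 0 ≤ t ^ θ := by positivity
  rcases le_total t 1 with h | h
  · calc (1 + t) ^ θ ≤ 2 ^ θ := by gcongr; linarith
      _ ≤ 2 ^ θ * (1 + t ^ θ) := le_mul_of_one_le_right (by positivity) (by linarith)
  · calc (1 + t) ^ θ ≤ (2 * t) ^ θ := by gcongr; linarith
      _ = 2 ^ θ * t ^ θ := Real.mul_rpow zero_le_two ht
      _ ≤ 2 ^ θ * (1 + t ^ θ) := by gcongr; linarith

theorem exists_rpow_le_norm_mul_cpow_add_one {c θ : ℝ} (hc : 0 < c) (hθ0 : 0 ≤ θ)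
    (hθ2 : θ < 2) : ∃ k > 0, ∀ w : ℂ, 0 ≤ w.re → k * (1 + ‖w‖) ^ θ ≤ ‖c * w ^ (θ : ℂ) + 1‖ := by
  set a := Real.cos (θ * Real.pi / 2)
  have ha : -1 < a := by
    rw [← Real.cos_pi]
    exact Real.cos_lt_cos_of_nonneg_of_le_pi (by positivity) le_rfl (by nlinarith [Real.pi_pos])
  refine ⟨√((1 + a) / 2) * min 1 c / 2 ^ θ,
    div_pos (mul_pos (Real.sqrt_pos.mpr (by linarith)) (lt_min one_pos hc)) (by positivity),
    fun w hw => ?_⟩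
  have hnorm : ‖(c : ℂ) * w ^ (θ : ℂ)‖ = c * ‖w‖ ^ θ := by
    rw [norm_mul, norm_real, Real.norm_of_nonneg hc.le, norm_cpow_real]
  have hre : a * ‖(c : ℂ) * w ^ (θ : ℂ)‖ ≤ ((c : ℂ) * w ^ (θ : ℂ)).re := by
    rw [hnorm, re_ofReal_mul, mul_left_comm]
    exact mul_le_mul_of_nonneg_left (cos_mul_norm_rpow_le_re_cpow hθ0 hθ2.le hw) hc.le
  refine le_trans ?_ (sqrt_mul_one_add_norm_le_norm_add_one ha.le (Real.cos_le_one _) hre)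
  have hw' : 0 ≤ ‖w‖ ^ θ := by positivity
  have hpow : (1 + ‖w‖) ^ θ / 2 ^ θ ≤ 1 + ‖w‖ ^ θ := by
    rw [div_le_iff₀' (by positivity)]
    exact one_add_rpow_le (norm_nonneg w) hθ0
  calc √((1 + a) / 2) * min 1 c / 2 ^ θ * (1 + ‖w‖) ^ θ
      = √((1 + a) / 2) * (min 1 c * ((1 + ‖w‖) ^ θ / 2 ^ θ)) := by ring
    _ ≤ √((1 + a) / 2) * (min 1 c * (1 + ‖w‖ ^ θ)) := by gcongr
    _ ≤ √((1 + a) / 2) * (1 + ‖(c : ℂ) * w ^ (θ : ℂ)‖) := by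
        rw [hnorm]
        gcongr
        nlinarith [min_le_left 1 c, min_le_right 1 c]

theorem integral_cexp_mul_div_mul_cpow_add_one_eq_zero {c θ r : ℝ} (hc : 0 < c) (hθ1 : 1 < θ)
    (hθ2 : θ < 2) (hr : r ≤ 0) :
    ∫ x : ℝ, cexp (I * r * x) / (c * (I * x) ^ (θ : ℂ) + 1) = 0 := by
  obtain ⟨k, hk, hden⟩ := exists_rpow_le_norm_mul_cpow_add_one hc (by linarith) hθ2
  have hre {z : ℂ} : (I * z).re = -z.im := by simp
  have hden_ne {z : ℂ} (hz : z.im ≤ 0) : (c : ℂ) * (I * z) ^ (θ : ℂ) + 1 ≠ 0 :=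
    norm_pos_iff.mp <| (mul_pos hk (by positivity)).trans_le (hden _ (by linarith [hre (z := z)]))
  refine integral_eq_zero_of_lowerHalfPlane
    (f := fun z => cexp (I * r * z) / (c * (I * z) ^ (θ : ℂ) + 1)) (K := k⁻¹) hθ1
    (fun z hz => ?_) (fun z hz => ?_) fun z hz => ?_
  · have hpow : ContinuousAt (fun z : ℂ => (I * z) ^ (θ : ℂ)) z :=
      (continuousAt_cpow_const_of_re_pos (Or.inl (by rw [hre]; linarith [hz.out]))
        (by rw [ofReal_re]; linarith)).comp (by fun_prop)
    exact (ContinuousAt.div (by fun_prop) ((hpow.const_mul _).add_const 1)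
      (hden_ne hz)).continuousWithinAt
  · have hpow : DifferentiableAt ℂ (fun z : ℂ => (I * z) ^ (θ : ℂ)) z :=
      (differentiableAt_id.const_mul I).cpow (differentiableAt_const _)
        (Or.inl (by rw [hre]; linarith [hz.out]))
    exact (DifferentiableAt.div (by fun_prop) ((hpow.const_mul _).add_const 1)
      (hden_ne hz.out.le)).differentiableWithinAt
  · have hnum : ‖cexp (I * r * z)‖ ≤ 1 := by
      rw [norm_exp, Real.exp_le_one_iff]
      simp only [mul_re, I_re, ofReal_re, zero_mul, I_im, ofReal_im, mul_zero, sub_self, mul_im,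
        one_mul, zero_add, zero_sub, Left.neg_nonpos_iff]
      nlinarith
    have := hden (I * z) (by rw [hre]; linarith)
    rw [norm_mul, norm_I, one_mul] at this
    rw [norm_div, Real.rpow_neg (by positivity), ← mul_inv, ← one_div]
    exact div_le_div₀ zero_le_one hnum (by positivity) this

/-- `F_U(r) = 0` for every `r ≤ 0`. -/
theorem stmt10 (c θ : ℝ) (hc : 0 < c) (hθ1 : 1 < θ) (hθ2 : θ < 2) :
    ∀ r : ℝ, r ≤ 0 → FUfun c θ r = 0 := by
  intro r hr
  simp_rw [FUfun, mul_assoc (c : ℂ), ← I_mul_ofReal_cpow]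
  rw [integral_cexp_mul_div_mul_cpow_add_one_eq_zero hc hθ1 hθ2 hr, mul_zero, zero_re]
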